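/- (Proposition: the output-space representation.) For all R, R_O ∈ O(n), the matrix V = M_nᵀ · D(R_O) · D(R) · D(R_O)ᵀ · M_n is orthogonal, i.e., Vᵀ·V = I_{n+1}, and det(V) = det(R). In particular V is a rotation of ℝ^{n+1} if det(R) = 1 and a reflection if det(R) = −1. -/

import Mathlib

/-!
The vertices of the regular simplex are unit vectors with pairwise inner products `-1/n`.
Appending the coordinate `n^{-1/2}` and dividing by `p = √(1 + 1/n)` therefore turns them into
an orthonormal basis of `ℝ^{n+1}`, so `M_n` is orthogonal. Since `D` maps `O(n)` into `O(n+1)` and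
preserves determinants, `V` is a product of orthogonal matrices and
`det V = (det M_n)² (det R_O)² det R = det R`.
-/

/-- κ = −(1+√(n+1))/n^{3/2} -/
noncomputable def simplexKappa (n : ℕ) : ℝ :=
  -(1 + Real.sqrt (n + 1)) / (n : ℝ) ^ ((3 : ℝ) / 2)

/-- μ = √(1 + 1/n) -/
noncomputable def simplexMu (n : ℕ) : ℝ := Real.sqrt (1 + 1 / n)

/-- The vertices p_1, …, p_{n+1} ∈ ℝ^n of the regular n-simplex (0-indexed by `Fin (n+1)`):
`p_1 = n^{-1/2}·𝟙` and `p_i = κ·𝟙 + μ·e_{i-1}` for `2 ≤ i ≤ n+1`. -/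
noncomputable def simplexVertex (n : ℕ) (i : Fin (n + 1)) : EuclideanSpace ℝ (Fin n) :=
  WithLp.toLp 2 fun j =>
    if (i : ℕ) = 0 then (n : ℝ) ^ (-(1 : ℝ) / 2)
    else simplexKappa n + (if (j : ℕ) = (i : ℕ) - 1 then simplexMu n else 0)

open Matrix

/-- The (n+1)×(n+1) change-of-basis matrix M_n whose i-th column is
m_i = (1/p)·(p_i, n^{-1/2}) with p = √(1 + 1/n). -/
noncomputable def simplexM (n : ℕ) : Matrix (Fin (n + 1)) (Fin (n + 1)) ℝ :=
  Matrix.of fun j i =>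
    (Real.sqrt (1 + 1 / n))⁻¹ *
      (if h : (j : ℕ) < n then simplexVertex n i ⟨j, h⟩ else (n : ℝ) ^ (-(1 : ℝ) / 2))
/-- D(A): the (n+1)×(n+1) block-diagonal matrix diag(A, 1), appending a 1 to the
diagonal of the n×n matrix A. -/
def blockDiag1 (n : ℕ) (A : Matrix (Fin n) (Fin n) ℝ) :
    Matrix (Fin (n + 1)) (Fin (n + 1)) ℝ :=
  Matrix.of fun i j =>
    if hi : (i : ℕ) < n then (if hj : (j : ℕ) < n then A ⟨i, hi⟩ ⟨j, hj⟩ else 0)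
    else (if (i : ℕ) = (j : ℕ) then 1 else 0)

lemma Real.rpow_neg_half_eq_inv_sqrt {x : ℝ} (hx : 0 ≤ x) : x ^ (-(1 : ℝ) / 2) = (√x)⁻¹ := by
  rw [Real.sqrt_eq_rpow, ← Real.rpow_neg hx]
  norm_num

section Simplex

open scoped InnerProductSpace

variable {n : ℕ}

lemma simplexKappa_eq : simplexKappa n = -(1 + √(n + 1)) / (n * √n) := by
  rw [simplexKappa, show ((3 : ℝ) / 2) = 1 / 2 * (3 : ℕ) by norm_num,
    Real.rpow_mul_natCast (Nat.cast_nonneg n), ← Real.sqrt_eq_rpow, pow_succ,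
    Real.sq_sqrt (Nat.cast_nonneg n)]

lemma simplexMu_eq (hn : n ≠ 0) : simplexMu n = √(n + 1) / √n := by
  rw [simplexMu, ← Real.sqrt_div' _ (Nat.cast_nonneg n), add_div, div_self (by positivity)]

lemma simplexMu_sq : simplexMu n ^ 2 = 1 + 1 / n :=
  Real.sq_sqrt (by positivity)

lemma simplexVertex_zero_apply (j : Fin n) : simplexVertex n 0 j = (√n)⁻¹ := by
  simp [simplexVertex, Real.rpow_neg_half_eq_inv_sqrt]

lemma simplexVertex_succ_apply (a j : Fin n) :
    simplexVertex n a.succ j = simplexKappa n + if j = a then simplexMu n else 0 := by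
  simp [simplexVertex, Fin.ext_iff]

lemma natCast_mul_simplexKappa_add_simplexMu (hn : n ≠ 0) :
    n * simplexKappa n + simplexMu n = -(√n)⁻¹ := by
  rw [simplexKappa_eq, simplexMu_eq hn]
  field_simp
  ring

lemma natCast_mul_simplexKappa_sq_add (hn : n ≠ 0) :
    n * simplexKappa n ^ 2 + 2 * simplexKappa n * simplexMu n = -1 / n := by
  have hs2 : √(n : ℝ) ^ 2 = n := Real.sq_sqrt (Nat.cast_nonneg n)
  have ht2 : √((n : ℝ) + 1) ^ 2 = n + 1 := Real.sq_sqrt (by positivity)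
  rw [simplexKappa_eq, simplexMu_eq hn]
  field_simp
  linear_combination (-1) * ht2 + hs2

lemma inner_simplexVertex (hn : n ≠ 0) (i j : Fin (n + 1)) :
    ⟪simplexVertex n i, simplexVertex n j⟫_ℝ = if i = j then 1 else -1 / (n : ℝ) := by
  have hsq : (√(n : ℝ))⁻¹ * (√(n : ℝ))⁻¹ = 1 / n := by
    rw [← mul_inv, Real.mul_self_sqrt (Nat.cast_nonneg n), one_div]
  have h₁ := natCast_mul_simplexKappa_add_simplexMu hn
  have h₂ := natCast_mul_simplexKappa_sq_add hn
  simp only [PiLp.inner_apply, RCLike.inner_apply, conj_trivial]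
  cases i using Fin.cases <;> cases j using Fin.cases <;>
    simp [simplexVertex_zero_apply, simplexVertex_succ_apply, (Fin.succ_ne_zero _).symm,
      Finset.sum_add_distrib, mul_add, add_mul, ite_mul, mul_ite]
  case zero.zero => rw [hsq, mul_one_div_cancel (by positivity)]
  case zero.succ => linear_combination (√(n : ℝ))⁻¹ * h₁ - hsq
  case succ.zero => linear_combination (√(n : ℝ))⁻¹ * h₁ - hsq
  case succ.succ =>
    split_ifs
    · linear_combination h₂ + simplexMu_sq
    · linear_combination h₂

lemma simplexM_castSucc_apply (k : Fin n) (i : Fin (n + 1)) :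
    simplexM n k.castSucc i = (√(1 + 1 / n))⁻¹ * simplexVertex n i k := by
  simp [simplexM]

lemma simplexM_last_apply (i : Fin (n + 1)) :
    simplexM n (Fin.last n) i = (√(1 + 1 / n))⁻¹ * (√n)⁻¹ := by
  simp [simplexM, Real.rpow_neg_half_eq_inv_sqrt]

lemma transpose_simplexM_mul_self_apply (i j : Fin (n + 1)) :
    ((simplexM n)ᵀ * simplexM n) i j =
      (1 + 1 / (n : ℝ))⁻¹ * (⟪simplexVertex n i, simplexVertex n j⟫_ℝ + 1 / n) := by
  have hp : (√(1 + 1 / (n : ℝ)))⁻¹ * (√(1 + 1 / (n : ℝ)))⁻¹ = (1 + 1 / (n : ℝ))⁻¹ := by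
    rw [← mul_inv, Real.mul_self_sqrt (by positivity)]
  have hs : (√(n : ℝ))⁻¹ * (√(n : ℝ))⁻¹ = 1 / n := by
    rw [← mul_inv, Real.mul_self_sqrt (Nat.cast_nonneg n), one_div]
  rw [mul_apply, Fin.sum_univ_castSucc]
  simp only [transpose_apply, simplexM_castSucc_apply, simplexM_last_apply, PiLp.inner_apply,
    RCLike.inner_apply, conj_trivial, mul_add, Finset.mul_sum]
  rw [← hp, ← hs]
  congr 1
  · exact Finset.sum_congr rfl fun k _ => by ring
  · ring

lemma simplexM_mem_orthogonalGroup (hn : n ≠ 0) :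
    simplexM n ∈ orthogonalGroup (Fin (n + 1)) ℝ := by
  rw [mem_orthogonalGroup_iff']
  ext i j
  rw [transpose_simplexM_mul_self_apply, inner_simplexVertex hn, one_apply]
  split_ifs
  · exact inv_mul_cancel₀ (by positivity)
  · ring

end Simplex

section BlockDiag

variable {n : ℕ}

lemma blockDiag1_eq_reindex_fromBlocks (A : Matrix (Fin n) (Fin n) ℝ) :
    blockDiag1 n A = reindex finSumFinEquiv finSumFinEquiv (fromBlocks A 0 0 1) := by
  ext i j
  cases i using Fin.lastCases <;> cases j using Fin.lastCases <;> simp [blockDiag1, Nat.ne_of_gt]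

lemma det_blockDiag1 (A : Matrix (Fin n) (Fin n) ℝ) : (blockDiag1 n A).det = A.det := by
  simp [blockDiag1_eq_reindex_fromBlocks]

lemma blockDiag1_mem_orthogonalGroup {A : Matrix (Fin n) (Fin n) ℝ}
    (hA : A ∈ orthogonalGroup (Fin n) ℝ) : blockDiag1 n A ∈ orthogonalGroup (Fin (n + 1)) ℝ := by
  rw [mem_orthogonalGroup_iff'] at hA ⊢
  simp [blockDiag1_eq_reindex_fromBlocks, fromBlocks_transpose, fromBlocks_multiply, hA]

end BlockDiag

lemma det_mul_self_of_mem_orthogonalGroup {m R : Type*} [Fintype m] [DecidableEq m] [CommRing R]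
    {A : Matrix m m R} (hA : A ∈ orthogonalGroup m R) : A.det * A.det = 1 := by
  simpa using congrArg det ((mem_orthogonalGroup_iff' m R).1 hA)

/-- (Proposition: the output-space representation.) For R, R_O ∈ O(n), the matrix
V = M_nᵀ · D(R_O) · D(R) · D(R_O)ᵀ · M_n is orthogonal (Vᵀ·V = I_{n+1}) and
det(V) = det(R). -/
theorem representation_orthogonal_det (n : ℕ) (hn : 1 ≤ n)
    (R RO : Matrix (Fin n) (Fin n) ℝ) (hR : Rᵀ * R = 1) (hRO : ROᵀ * RO = 1) :
    ((simplexM n)ᵀ * blockDiag1 n RO * blockDiag1 n R * (blockDiag1 n RO)ᵀ *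
        simplexM n)ᵀ *
      ((simplexM n)ᵀ * blockDiag1 n RO * blockDiag1 n R * (blockDiag1 n RO)ᵀ *
        simplexM n) = 1 ∧
    ((simplexM n)ᵀ * blockDiag1 n RO * blockDiag1 n R * (blockDiag1 n RO)ᵀ *
        simplexM n).det = R.det := by
  have hM := simplexM_mem_orthogonalGroup (Nat.one_le_iff_ne_zero.mp hn)
  have hRO' : RO ∈ orthogonalGroup (Fin n) ℝ := (mem_orthogonalGroup_iff' _ _).2 hRO
  have hDR := blockDiag1_mem_orthogonalGroup ((mem_orthogonalGroup_iff' _ _).2 hR)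
  have hDRO := blockDiag1_mem_orthogonalGroup hRO'
  refine ⟨(mem_orthogonalGroup_iff' _ _).1 ?_, ?_⟩
  · exact mul_mem (mul_mem (mul_mem (mul_mem (transpose_mem_unitaryGroup_iff.2 hM) hDRO) hDR)
      (transpose_mem_unitaryGroup_iff.2 hDRO)) hM
  · simp only [det_mul, det_transpose, det_blockDiag1]
    linear_combination (RO.det * RO.det * R.det) * det_mul_self_of_mem_orthogonalGroup hM +
      R.det * det_mul_self_of_mem_orthogonalGroup hRO'
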